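/- arXiv:1303.5270 — 2 statements merged into one kernel-verified Lean document; each statement's English description precedes it below -/
import Mathlib

section
/- Let p be an odd prime, q a prime, m an odd positive integer, n = q^m with 4n < p, and a an integer with a^2 ≤ 4n. If n^{(p-1)/2} ≡ 1 (mod p), then neither a^2 ≡ n (mod p) nor a^2 ≡ 4n (mod p) can hold. -/
lemma not_sq_of_odd_exp (q m : ℕ) (hq : q.Prime) (hm : Odd m) (b : ℕ)
    (h : b ^ 2 = q ^ m) : False := by
  have hb : b ≠ 0 := by
    intro h0; rw [h0] at h; exact (pow_ne_zero m hq.pos.ne') h.symm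
  have := congrArg (fun f => f q) (congrArg Nat.factorization h)
  simp [Nat.Prime.factorization_pow hq, Nat.factorization_pow] at this
  exact (Nat.not_even_iff_odd.mpr hm) ⟨b.factorization q, by omega⟩

theorem stmt_4 (p q m : ℕ) (hp : p.Prime) (hpodd : Odd p) (hq : q.Prime)
    (hm : Odd m) (hm0 : 0 < m) (hnp : 4 * q ^ m < p)
    (a : ℤ) (ha : a ^ 2 ≤ 4 * (q ^ m : ℤ))
    (heuler : ((q ^ m : ℕ) : ZMod p) ^ ((p - 1) / 2) = 1) :
    ¬ ((a : ZMod p) ^ 2 = ((q ^ m : ℕ) : ZMod p)) ∧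
    ¬ ((a : ZMod p) ^ 2 = ((4 * q ^ m : ℕ) : ZMod p)) := by
  have hq0 : (0 : ℤ) < (q : ℤ) := by exact_mod_cast hq.pos
  have hn0 : (0 : ℤ) < (q : ℤ) ^ m := by positivity
  have hpn : (4 * (q : ℤ) ^ m) < p := by exact_mod_cast hnp
  have ha0 : (0 : ℤ) ≤ a ^ 2 := sq_nonneg a
  have key : ∀ c : ℕ, (c : ℤ) ≤ 4 * (q : ℤ) ^ m →
      ((a : ZMod p) ^ 2 = ((c : ℕ) : ZMod p)) → a ^ 2 = (c : ℤ) := by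
    intro c hc hcast
    have : ((a ^ 2 - c : ℤ) : ZMod p) = 0 := by
      push_cast
      rw [hcast]
      push_cast
      ring
    have hdvd : (p : ℤ) ∣ a ^ 2 - c := by
      exact_mod_cast (ZMod.intCast_zmod_eq_zero_iff_dvd _ p).mp this
    have hc0 : (0 : ℤ) ≤ (c : ℤ) := Int.natCast_nonneg c
    have : a ^ 2 - c = 0 := by
      refine Int.eq_zero_of_abs_lt_dvd hdvd ?_
      rw [abs_lt]
      constructor <;> linarith
    linarith
  constructor
  · intro h
    have h1 : a ^ 2 = ((q ^ m : ℕ) : ℤ) := key (q ^ m) (by push_cast; linarith) h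
    have : a.natAbs ^ 2 = q ^ m := by
      have := congrArg Int.natAbs h1
      simpa [Int.natAbs_pow] using this
    exact not_sq_of_odd_exp q m hq hm a.natAbs this
  · intro h
    have h1 : a ^ 2 = ((4 * q ^ m : ℕ) : ℤ) := key (4 * q ^ m) (by push_cast; linarith) h
    have h1' : a ^ 2 = 4 * (q : ℤ) ^ m := by push_cast at h1; linarith
    have heven : Even a := by
      have : Even (a ^ 2) := by rw [h1']; exact ⟨2 * (q:ℤ) ^ m, by ring⟩
      simpa [Int.even_pow] using this
    obtain ⟨b, hb⟩ := heven
    have hb2 : b ^ 2 = ((q : ℤ)) ^ m := by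
      rw [hb] at h1'; ring_nf at h1' ⊢; linarith
    have : b.natAbs ^ 2 = q ^ m := by
      have := congrArg Int.natAbs hb2
      simpa [Int.natAbs_pow] using this
    exact not_sq_of_odd_exp q m hq hm b.natAbs this
end

section
/- Let p be an odd prime, q a prime, m an odd positive integer, and n = q^m with 4n < p. Suppose a ∈ ℤ satisfies a^2 ≤ 4n and a^2 ≡ 3n (mod p). Then q = 3 and a^2 = 3n. -/
theorem stmt_17 (p q m : ℕ) (hp : p.Prime) (hpodd : Odd p) (hq : q.Prime)
    (hm : Odd m) (hm0 : 0 < m) (hnp : 4 * q ^ m < p)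
    (a : ℤ) (ha : a ^ 2 ≤ 4 * (q ^ m : ℤ))
    (hcong : (a : ZMod p) ^ 2 = ((3 * q ^ m : ℕ) : ZMod p)) :
    q = 3 ∧ a ^ 2 = 3 * (q ^ m : ℤ) := by
  have hn0 : (0:ℤ) < (q:ℤ) ^ m := pow_pos (by exact_mod_cast hq.pos) m
  have hnp' : 4 * (q:ℤ) ^ m < (p:ℤ) := by exact_mod_cast hnp
  have h0 : ((a ^ 2 - 3 * (q:ℤ) ^ m : ℤ) : ZMod p) = 0 := by
    push_cast at hcong ⊢
    rw [hcong]; ring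
  have hdvd : (p:ℤ) ∣ a ^ 2 - 3 * (q:ℤ) ^ m :=
    (ZMod.intCast_zmod_eq_zero_iff_dvd _ _).mp h0
  have heq : a ^ 2 = 3 * (q:ℤ) ^ m := by
    have habs : |a ^ 2 - 3 * (q:ℤ) ^ m| < (p:ℤ) := by
      rw [abs_lt]
      constructor <;> nlinarith [sq_nonneg a]
    have := Int.eq_zero_of_abs_lt_dvd hdvd habs
    linarith
  refine ⟨?_, heq⟩
  have h3a : (3:ℤ) ∣ a := by
    have : (3:ℤ) ∣ a ^ 2 := ⟨(q:ℤ) ^ m, heq⟩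
    exact Int.Prime.dvd_pow' (by norm_num) this
  obtain ⟨b, hb⟩ := h3a
  have hab : a ^ 2 = 9 * b ^ 2 := by rw [hb]; ring
  have h3n : (3:ℤ) ∣ (q:ℤ) ^ m := ⟨b ^ 2, by linarith⟩
  have h3n' : 3 ∣ q ^ m := by exact_mod_cast h3n
  have h3q : 3 ∣ q := (Nat.Prime.dvd_of_dvd_pow (by norm_num)) h3n'
  exact ((Nat.prime_dvd_prime_iff_eq (by norm_num) hq).mp h3q).symm
end
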